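/- Let α > 0, β > 0 and C₀ > 0. There exist φ₀ ∈ (0, π/2), c > 0 and t₀ > 0, depending only on α, β, C₀, with the following property: for every t ≥ t₀ and y ∈ ℝ with −C₀ < (y/t + 2√(3αβ)) t^{2/3} < 0, setting ξ = y/t and k₁ = ((−ξ + √(ξ² − 12αβ))/(24α))^{1/2}, one has Im θ(k₁ + u + iv, ξ) ≥ c·u²·v for all real u ≥ 0 and 0 ≤ v ≤ u·tan φ₀. -/

import Mathlib

/-- The phase function `θ(k, ξ) = kξ + 4αk³ − β/(4k)` for `k ∈ ℂ ∖ {0}`. -/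
noncomputable def theta (α β ξ : ℝ) (k : ℂ) : ℂ :=
  k * (ξ : ℂ) + 4 * (α : ℂ) * k ^ 3 - (β : ℂ) / (4 * k)

/-- The largest real zero `k₁` of `θ′(·, ξ)` when `α, β > 0` and `ξ < −2√(3αβ)`. -/
noncomputable def k1def (α β ξ : ℝ) : ℝ :=
  Real.sqrt ((-ξ + Real.sqrt (ξ ^ 2 - 12 * α * β)) / (24 * α))

lemma theta_im (α β ξ w u v : ℝ) (hw : 0 < w) (hu : 0 ≤ u) :
    (theta α β ξ ((w:ℂ) + (u:ℂ) + (v:ℂ) * Complex.I)).im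
      = v*ξ + 4*α*(3*(w+u)^2*v - v^3) + β*v/(4*((w+u)^2+v^2)) := by
  have hP : (0:ℝ) < (w+u)^2 + v^2 := by positivity
  have h2 : (v ^ 2 * 4 + w * u * 8 + w ^ 2 * 4 + u ^ 2 * 4) ≠ 0 := by nlinarith
  rw [theta]
  simp only [Complex.add_im, Complex.sub_im, Complex.mul_im, Complex.mul_re,
    Complex.div_im, Complex.normSq_apply, Complex.add_re, Complex.mul_re,
    Complex.ofReal_re, Complex.ofReal_im, Complex.I_re, Complex.I_im,
    Complex.re_ofNat, Complex.im_ofNat, pow_succ, pow_zero, one_mul]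
  ring_nf
  have key : (v ^ 2 * 16 + w * u * 32 + w ^ 2 * 16 + u ^ 2 * 16)⁻¹ * (4:ℝ)
      = (v ^ 2 * 4 + w * u * 8 + w ^ 2 * 4 + u ^ 2 * 4)⁻¹ := by
    rw [show (v ^ 2 * 16 + w * u * 32 + w ^ 2 * 16 + u ^ 2 * 16)
        = 4*(v ^ 2 * 4 + w * u * 8 + w ^ 2 * 4 + u ^ 2 * 4) by ring, mul_inv]
    field_simp
  linear_combination v * β * key

/-- The key algebraic bracket estimate. -/
lemma bracket_est (α β ξ w u v : ℝ) (hα : 0 < α) (hβ : 0 < β) (hw : 0 < w)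
    (hu : 0 ≤ u) (hv : 0 ≤ v) (hvu : 2*v ≤ u)
    (hquad : 48*α*(w^2)^2 + 4*ξ*w^2 + β = 0)
    (hβs : β ≤ 48*α*(w^2)^2) :
    8*α*u^2 ≤ ξ + 12*α*(w+u)^2 - 4*α*v^2 + β/(4*((w+u)^2+v^2)) := by
  have hP : (0:ℝ) < (w+u)^2 + v^2 := by positivity
  rw [← sub_nonneg]
  have hrw : ξ + 12*α*(w+u)^2 - 4*α*v^2 + β/(4*((w+u)^2+v^2)) - 8*α*u^2
      = ((ξ + 12*α*(w+u)^2 - 4*α*v^2 - 8*α*u^2) * (4*((w+u)^2+v^2)) + β)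
        / (4*((w+u)^2+v^2)) := by
    field_simp
    ring
  rw [hrw]
  apply div_nonneg _ (by positivity)
  -- multiply by s = w^2 > 0
  have hs : (0:ℝ) < w^2 := by positivity
  have hNs : 0 ≤ (((ξ + 12*α*(w+u)^2 - 4*α*v^2 - 8*α*u^2) * (4*((w+u)^2+v^2)) + β)) * w^2 := by
    have hPs : w^2 ≤ (w+u)^2 + v^2 := by nlinarith
    have hstep1 : β * ((w+u)^2+v^2 - w^2) ≤ 48*α*(w^2)^2*((w+u)^2+v^2 - w^2) :=
      mul_le_mul_of_nonneg_right hβs (by linarith)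
    have hv2 : 4*v^2 ≤ u^2 := by nlinarith
    have hv4 : v^4 ≤ u^4 := by nlinarith
    have hE : 0 ≤ 10*w^2*u^2 - 4*w^2*v^2 + 8*w*u^3 + 4*w*u*v^2 + u^4 - v^4 := by
      nlinarith [mul_nonneg (mul_nonneg hw.le hw.le) (by linarith : (0:ℝ) ≤ u^2 - 4*v^2),
        mul_nonneg (mul_nonneg hw.le hu) (mul_nonneg hu hu),
        mul_nonneg (mul_nonneg hw.le hu) (mul_nonneg hv hv), hv4]
    nlinarith [mul_nonneg (by positivity : (0:ℝ) ≤ 16*α*w^2) hE, hstep1, hquad]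
  nlinarith [hNs, hs]

set_option maxHeartbeats 1000000 in
/-- Uniform quadratic sign estimate `Im θ ≥ c u² v` to the right of the saddle point `k₁`
in the transition region `−C₀ < (y/t + 2√(3αβ)) t^{2/3} < 0`. -/
theorem stmt15 (α β C₀ : ℝ) (hα : 0 < α) (hβ : 0 < β) (hC : 0 < C₀) :
    ∃ φ₀ : ℝ, 0 < φ₀ ∧ φ₀ < Real.pi / 2 ∧ ∃ c : ℝ, 0 < c ∧ ∃ t₀ : ℝ, 0 < t₀ ∧
      ∀ t : ℝ, t₀ ≤ t → ∀ y : ℝ,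
        -C₀ < (y / t + 2 * Real.sqrt (3 * α * β)) * t ^ ((2 : ℝ) / 3) →
        (y / t + 2 * Real.sqrt (3 * α * β)) * t ^ ((2 : ℝ) / 3) < 0 →
        ∀ u v : ℝ, 0 ≤ u → 0 ≤ v → v ≤ u * Real.tan φ₀ →
          c * u ^ 2 * v
            ≤ (theta α β (y / t)
                ((k1def α β (y / t) : ℂ) + (u : ℂ) + (v : ℂ) * Complex.I)).im := by
  refine ⟨Real.arctan (1/2), (by rw [← Real.arctan_zero]; exact Real.arctan_strictMono (by norm_num)),
    Real.arctan_lt_pi_div_two _, 8*α, by positivity, 1, one_pos, ?_⟩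
  intro t ht y _h1 h2 u v hu hv hvu
  rw [Real.tan_arctan] at hvu
  have hvu' : 2*v ≤ u := by linarith
  set ξ := y / t with hξdef
  have ht0 : (0:ℝ) < t := lt_of_lt_of_le one_pos ht
  have htp : (0:ℝ) < t ^ ((2:ℝ)/3) := Real.rpow_pos_of_pos ht0 _
  have hsqnn : 0 ≤ Real.sqrt (3*α*β) := Real.sqrt_nonneg _
  have hsq : Real.sqrt (3*α*β) ^ 2 = 3*α*β := Real.sq_sqrt (by positivity)
  have hsqpos : 0 < Real.sqrt (3*α*β) := Real.sqrt_pos.2 (by positivity)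
  have hξ : ξ + 2 * Real.sqrt (3*α*β) < 0 := by
    by_contra h
    push_neg at h
    nlinarith [mul_nonneg h htp.le]
  have hξneg : ξ < 0 := by nlinarith
  have hD : 0 < ξ^2 - 12*α*β := by nlinarith
  have hDsq : Real.sqrt (ξ^2-12*α*β) ^ 2 = ξ^2-12*α*β := Real.sq_sqrt hD.le
  have hDnn : 0 ≤ Real.sqrt (ξ^2-12*α*β) := Real.sqrt_nonneg _
  set s := (-ξ + Real.sqrt (ξ^2 - 12*α*β)) / (24*α) with hsdef
  have hs : 0 < s := by
    apply div_pos (by nlinarith) (by nlinarith)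
  have hquad : 48*α*s^2 + 4*ξ*s + β = 0 := by
    rw [hsdef]
    field_simp
    have hDsq' : Real.sqrt (ξ^2 - α*12*β) ^ 2 = ξ^2 - α*12*β := by
      rw [show α*12*β = 12*α*β by ring]; exact hDsq
    nlinarith [hDsq']
  have hβs : β ≤ 48*α*s^2 := by
    have h24 : 24*α*s = -ξ + Real.sqrt (ξ^2-12*α*β) := by
      rw [hsdef]; field_simp
    nlinarith [hsq, hDnn, hξ, hα, hsqnn]
  have hk1 : k1def α β ξ = Real.sqrt s := by rw [k1def, hsdef]
  set w := Real.sqrt s with hwdef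
  have hw2 : w^2 = s := Real.sq_sqrt hs.le
  have hwpos : 0 < w := Real.sqrt_pos.2 hs
  rw [hk1, theta_im α β ξ w u v hwpos hu]
  have hbr := bracket_est α β ξ w u v hα hβ hwpos hu hv hvu'
    (by rw [hw2]; linarith) (by rw [hw2]; exact hβs)
  have := mul_le_mul_of_nonneg_left hbr hv
  have hP : (0:ℝ) < (w+u)^2 + v^2 := by positivity
  have hring : v * (ξ + 12*α*(w+u)^2 - 4*α*v^2 + β/(4*((w+u)^2+v^2)))
      = v*ξ + 4*α*(3*(w+u)^2*v - v^3) + β*v/(4*((w+u)^2+v^2)) := by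
    field_simp
    ring
  linarith [this, hring]
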